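/- Let A be a bounded normal operator on a complex Hilbert space H and (L_n) ∈ Λ with associated operators S_n := S_{L_n}. If z ∉ Q(σ_ess(A)) and there exist z_n ∈ σ(S_n) with z_n → z, then z ∈ σ_dis(A) ∪ σ_dis(A*). -/

import Mathlib

open scoped InnerProductSpace ComplexConjugate Classical
open Complex ContinuousLinearMap

noncomputable section

variable {H : Type*} [NormedAddCommGroup H] [InnerProductSpace ℂ H] [CompleteSpace H]

/-- Orthogonal projection onto a subspace, as a map into the subspace (junk value `0` if the
subspace admits no orthogonal projection). -/
def projCLM (L : Submodule ℂ H) : H →L[ℂ] ↥L :=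
  if h : L.HasOrthogonalProjection then (letI := h; L.orthogonalProjectionOnto) else 0

/-- Compression `P B|_L : L → L` of an operator to a subspace. -/
def compress (B : H →L[ℂ] H) (L : Submodule ℂ H) : ↥L →L[ℂ] ↥L :=
  projCLM L ∘L B ∘L L.subtypeL

/-- Block operator matrix `[[B11, B12],[B21, B22]]` on `E × E`. -/
def block2 {E : Type*} [NormedAddCommGroup E] [NormedSpace ℂ E]
    (B11 B12 B21 B22 : E →L[ℂ] E) : (E × E) →L[ℂ] (E × E) :=
  ((B11 ∘L ContinuousLinearMap.fst ℂ E E) + (B12 ∘L ContinuousLinearMap.snd ℂ E E)).prod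
  ((B21 ∘L ContinuousLinearMap.fst ℂ E E) + (B22 ∘L ContinuousLinearMap.snd ℂ E E))

/-- `S_L = [[P(A + A*)|_L, −P A*A|_L],[I, 0]]` on `L × L`. -/
def SL (A : H →L[ℂ] H) (L : Submodule ℂ H) : (↥L × ↥L) →L[ℂ] (↥L × ↥L) :=
  block2 (compress (A + ContinuousLinearMap.adjoint A) L)
    (-(compress (ContinuousLinearMap.adjoint A * A) L)) 1 0

/-- The second order spectrum of `A` relative to `L`. -/
def Spec2 (A : H →L[ℂ] H) (L : Submodule ℂ H) : Set ℂ :=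
  {z | ∃ φ ∈ L, φ ≠ 0 ∧ ∀ ψ ∈ L, ⟪(A - z • 1) φ, (A - (conj z) • 1) ψ⟫_ℂ = 0}

/-- `Σ_z := {(λ − z)(conj λ − z) : λ ∈ Σ}`. -/
def sigmaSet (S : Set ℂ) (z : ℂ) : Set ℂ := (fun l => (l - z) * ((conj l) - z)) '' S

/-- `Q(Σ) := {z : 0 ∈ closed convex hull of Σ_z}`. -/
def QSet (S : Set ℂ) : Set ℂ := {z | (0 : ℂ) ∈ closure (convexHull ℝ (sigmaSet S z))}

/-- The essential spectrum: the spectrum of the image in the Calkin algebra, i.e. the set of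
`z` such that `A − z` is not invertible modulo compact operators. -/
def essSpectrum (A : H →L[ℂ] H) : Set ℂ :=
  {z | ¬ ∃ B : H →L[ℂ] H, IsCompactOperator ⇑(B * (A - z • 1) - 1) ∧
        IsCompactOperator ⇑((A - z • 1) * B - 1)}

/-- The discrete spectrum: isolated points of the spectrum which are eigenvalues of finite
multiplicity. -/
def discSpectrum (A : H →L[ℂ] H) : Set ℂ :=
  {z | z ∈ spectrum ℂ A ∧ (∃ ε > 0, ∀ w ∈ spectrum ℂ A, dist w z < ε → w = z) ∧
    LinearMap.ker ((A - z • 1 : H →L[ℂ] H) : H →ₗ[ℂ] H) ≠ ⊥ ∧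
    FiniteDimensional ℂ ↥(LinearMap.ker ((A - z • 1 : H →L[ℂ] H) : H →ₗ[ℂ] H))}

/-- Orthogonal projection onto a subspace, as an endomorphism of the ambient space. -/
def projAmb (L : Submodule ℂ H) : H →L[ℂ] H := L.subtypeL ∘L projCLM L


/-!
Separating `0` from the closed convex hull of `Σ_z` for `Σ = σ_ess(A)` gives `c ∈ ℂ` and `γ > 0`
with `γ < Re (c s)` on `Σ_z`. Through the functional calculus of the normal operator `A`, this
says that `Re (c T_z) ≥ γ` modulo a compact operator, where `T_z = (A* - z)(A - z)`: the spectral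
points where `Re (c (conj λ - z)(λ - z)) ≤ γ` lie outside `σ_ess(A)`, so they are finitely many
isolated eigenvalues of finite multiplicity. An eigenvalue `z_n` of `S_n` gives a unit vector
`φ_n ∈ L_n` with `⟪T_{z_n} φ_n, ψ⟫ = 0` for `ψ ∈ L_n`; a weak cluster point `φ` of `(φ_n)` then
satisfies `T_z φ = 0`, and the inequality above rules out `φ = 0`. So `z` is an eigenvalue of `A`
or of `A*`, necessarily discrete as `z, conj z ∉ σ_ess(A)`.

A point `w ∈ σ(A) \ σ_ess(A)` is isolated because `N = A - w` is bounded below on `(ker N)ᗮ`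
(a compactness argument), `N` maps into `(ker N)ᗮ` by normality, and hence `N - μ` is bounded
below, thus invertible, for small `μ ≠ 0`.
-/

open Filter Topology

variable {E : Type*} [NormedAddCommGroup E] [InnerProductSpace ℂ E]

/-- The quadratic pencil `(A* - w)(A - w)`; `S_L` is the companion linearisation of its
compression `P (A*A - w (A + A*) + w²)|_L`. -/
def quadPencil (A : H →L[ℂ] H) (w : ℂ) : H →L[ℂ] H := (adjoint A - w • 1) * (A - w • 1)

theorem continuous_quadPencil (A : H →L[ℂ] H) : Continuous (quadPencil A) := by
  unfold quadPencil
  fun_prop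

theorem adjoint_sub_conj_smul_one (A : H →L[ℂ] H) (w : ℂ) :
    adjoint (A - conj w • 1) = adjoint A - w • 1 := by
  simp [map_sub, ← star_eq_adjoint, star_smul]

theorem IsStarNormal.sub_smul_one {R : Type*} [Ring R] [StarRing R] [Algebra ℂ R]
    [StarModule ℂ R] {a : R} (ha : IsStarNormal a) (w : ℂ) : IsStarNormal (a - w • 1) :=
  Commute.isStarNormal_sub (by rw [star_smul, star_one]; exact (Commute.one_right a).smul_right _)

theorem mem_spectrum_of_apply_eq_zero {V : Type*} [NormedAddCommGroup V] [NormedSpace ℂ V]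
    {T : V →L[ℂ] V} {w : ℂ} {x : V} (hx : x ≠ 0) (h : (T - w • 1) x = 0) :
    w ∈ spectrum ℂ T := by
  rw [spectrum.mem_iff, Algebra.algebraMap_eq_smul_one, ← neg_sub, IsUnit.neg_iff]
  rintro ⟨u, hu⟩
  have := congr($(u.inv_mul) x)
  rw [mul_apply_eq_comp, hu, h, map_zero, one_apply_eq_self] at this
  exact hx this.symm

theorem isCompactOperator_of_forall_mem {V : Type*} [NormedAddCommGroup V] [NormedSpace ℂ V]
    (f : V →L[ℂ] V) (W : Submodule ℂ V) [FiniteDimensional ℂ W] (h : ∀ x, f x ∈ W) :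
    IsCompactOperator ⇑f :=
  (isCompactOperator_of_locallyCompactSpace_dom (f.codRestrict W h)).clm_comp W.subtypeL

theorem IsCompactOperator.exists_tendsto_subseq_of_tendsto_add {V : Type*}
    [NormedAddCommGroup V] [NormedSpace ℂ V] {K : V →L[ℂ] V} (hK : IsCompactOperator ⇑K)
    {y : ℕ → V} (hy : ∀ n, ‖y n‖ ≤ 1) (h : Tendsto (fun n => y n + K (y n)) atTop (𝓝 0)) :
    ∃ u, ∃ φ : ℕ → ℕ, StrictMono φ ∧ Tendsto (y ∘ φ) atTop (𝓝 u) := by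
  obtain ⟨v, -, φ, hφ, hv⟩ := (hK.isCompact_closure_image_closedBall 1).tendsto_subseq fun n =>
    subset_closure ⟨y n, mem_closedBall_zero_iff.mpr (hy n), rfl⟩
  refine ⟨-v, φ, hφ, ?_⟩
  simpa [Function.comp_def] using (h.comp hφ.tendsto_atTop).sub hv

theorem finiteDimensional_ker_of_isCompactOperator {N B : H →L[ℂ] H}
    (hK : IsCompactOperator ⇑(B * N - 1)) :
    FiniteDimensional ℂ (LinearMap.ker (N : H →ₗ[ℂ] H)) := by
  have := ContinuousLinearMap.finite_dimensional_eigenspace hK (-1) (by norm_num)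
  refine Submodule.finiteDimensional_of_le
    (S₂ := Module.End.eigenspace (B * N - 1 : H →L[ℂ] H).toLinearMap (-1)) fun x hx => ?_
  rw [Module.End.mem_eigenspace_iff]
  simp [LinearMap.mem_ker.mp hx]

theorem exists_mul_norm_le_of_mem_orthogonal_ker {N B : E →L[ℂ] E}
    (hK : IsCompactOperator ⇑(B * N - 1)) :
    ∃ c > 0, ∀ x ∈ (LinearMap.ker (N : E →ₗ[ℂ] E))ᗮ, c * ‖x‖ ≤ ‖N x‖ := by
  set M := (LinearMap.ker (N : E →ₗ[ℂ] E))ᗮ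
  by_contra! h
  have hunit : ∀ n : ℕ, ∃ y ∈ M, ‖y‖ = 1 ∧ ‖N y‖ < 1 / (n + 1) := by
    intro n
    obtain ⟨x, hxM, hx⟩ := h (1 / (n + 1)) (by positivity)
    have hx0 : x ≠ 0 := by rintro rfl; simp at hx
    refine ⟨(‖x‖⁻¹ : ℂ) • x, M.smul_mem _ hxM, norm_smul_inv_norm hx0, ?_⟩
    rw [map_smul, norm_smul, norm_inv, Complex.norm_real, norm_norm,
      inv_mul_lt_iff₀ (norm_pos_iff.mpr hx0), mul_comm]
    exact hx
  choose y hyM hy1 hyN using hunit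
  have hNy : Tendsto (fun n => N (y n)) atTop (𝓝 0) :=
    squeeze_zero_norm (fun n => (hyN n).le) tendsto_one_div_add_atTop_nhds_zero_nat
  have hBNy : Tendsto (fun n => y n + (B * N - 1) (y n)) atTop (𝓝 0) := by
    simpa [Function.comp_def] using (B.continuous.tendsto 0).comp hNy
  obtain ⟨u, φ, hφ, hu⟩ := hK.exists_tendsto_subseq_of_tendsto_add (fun n => (hy1 n).le) hBNy
  have hu1 : ‖u‖ = 1 := tendsto_nhds_unique hu.norm (by simp [hy1])
  have huN : N u = 0 :=
    tendsto_nhds_unique ((N.continuous.tendsto u).comp hu) (hNy.comp hφ.tendsto_atTop)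
  have huM : u ∈ M :=
    (Submodule.isClosed_orthogonal _).mem_of_tendsto hu (Eventually.of_forall fun n => hyM (φ n))
  have : u = 0 := by
    simpa using Submodule.inner_right_of_mem_orthogonal (u := u) (v := u) huN huM
  simp [this] at hu1

section NormalOperator

variable {N : H →L[ℂ] H}

theorem IsStarNormal.isUnit_of_forall_mul_norm_le (hN : IsStarNormal N) {c : ℝ} (hc : 0 < c)
    (h : ∀ x, c * ‖x‖ ≤ ‖N x‖) : IsUnit N := by
  have hT : IsUnit (star N * N) := by
    refine isUnit_of_forall_le_norm_inner_map _ (c := ⟨c ^ 2, sq_nonneg c⟩)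
      (pow_pos hc 2 :) fun x => ?_
    change ‖x‖ ^ 2 * c ^ 2 ≤ _
    rw [mul_apply_eq_comp, star_eq_adjoint, adjoint_inner_left, inner_self_eq_norm_sq_to_K,
      norm_pow, RCLike.norm_ofReal, abs_norm, ← mul_pow, mul_comm]
    exact pow_le_pow_left₀ (by positivity) (h x) 2
  exact (hN.star_comm_self.isUnit_mul_iff.mp hT).2

theorem IsStarNormal.apply_mem_orthogonal_ker (hN : IsStarNormal N) (x : H) :
    N x ∈ (LinearMap.ker (N : H →ₗ[ℂ] H))ᗮ := by
  intro k (hk : N k = 0)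
  rw [← adjoint_inner_left, (hN.adjoint_apply_eq_zero_iff k).mpr hk, inner_zero_left]

theorem IsStarNormal.min_mul_norm_le_norm_sub_smul_apply (hN : IsStarNormal N)
    [(LinearMap.ker (N : H →ₗ[ℂ] H)).HasOrthogonalProjection] {c : ℝ}
    (hc : ∀ x ∈ (LinearMap.ker (N : H →ₗ[ℂ] H))ᗮ, c * ‖x‖ ≤ ‖N x‖) {μ : ℂ} (hμ : ‖μ‖ ≤ c)
    (x : H) : min ‖μ‖ (c - ‖μ‖) * ‖x‖ ≤ ‖(N - μ • 1) x‖ := by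
  set K := LinearMap.ker (N : H →ₗ[ℂ] H)
  obtain ⟨e, he, f, hf, rfl⟩ := K.exists_add_mem_mem_orthogonal x
  have hsplit : (N - μ • 1) (e + f) = (N f - μ • f) + (-μ) • e := by
    rw [sub_apply, map_add, map_add, show N e = 0 from he]
    simp only [smul_apply, one_apply_eq_self]
    module
  have hNf : N f - μ • f ∈ Kᗮ := Kᗮ.sub_mem (hN.apply_mem_orthogonal_ker f) (Kᗮ.smul_mem μ hf)
  have hx : ‖e + f‖ ^ 2 = ‖e‖ ^ 2 + ‖f‖ ^ 2 := by
    simpa only [← sq] using norm_add_sq_eq_norm_sq_add_norm_sq_of_inner_eq_zero _ _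
      (K.inner_right_of_mem_orthogonal he hf)
  have hy : ‖(N - μ • 1) (e + f)‖ ^ 2 = ‖N f - μ • f‖ ^ 2 + ‖μ‖ ^ 2 * ‖e‖ ^ 2 := by
    rw [hsplit, ← mul_pow, ← norm_neg μ, ← norm_smul]
    simpa only [← sq] using norm_add_sq_eq_norm_sq_add_norm_sq_of_inner_eq_zero _ _
      (K.inner_left_of_mem_orthogonal (K.smul_mem _ he) hNf)
  have hf' : (c - ‖μ‖) * ‖f‖ ≤ ‖N f - μ • f‖ := by
    have := norm_sub_norm_le (N f) (μ • f)
    rw [norm_smul] at this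
    linarith [hc f hf]
  set m := min ‖μ‖ (c - ‖μ‖)
  have hm0 : 0 ≤ m := le_min (norm_nonneg μ) (by linarith)
  have hmf : m * ‖f‖ ≤ ‖N f - μ • f‖ :=
    (mul_le_mul_of_nonneg_right (min_le_right _ _) (norm_nonneg f)).trans hf'
  have hme : m * ‖e‖ ≤ ‖μ‖ * ‖e‖ := mul_le_mul_of_nonneg_right (min_le_left _ _) (norm_nonneg e)
  rw [← pow_le_pow_iff_left₀ (by positivity) (norm_nonneg _) two_ne_zero, mul_pow, hx, hy]
  nlinarith [pow_le_pow_left₀ (by positivity) hmf 2, pow_le_pow_left₀ (by positivity) hme 2]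

end NormalOperator

section Spectrum

variable {A : H →L[ℂ] H}

theorem finiteDimensional_ker_of_notMem_essSpectrum {w : ℂ} (hw : w ∉ essSpectrum A) :
    FiniteDimensional ℂ (LinearMap.ker ((A - w • 1 : H →L[ℂ] H) : H →ₗ[ℂ] H)) :=
  let ⟨_, hK, _⟩ := not_not.mp hw
  finiteDimensional_ker_of_isCompactOperator hK

theorem exists_spectrum_isolated_of_notMem_essSpectrum (hA : IsStarNormal A) {w : ℂ}
    (hw : w ∉ essSpectrum A) : ∃ ε > 0, ∀ v ∈ spectrum ℂ A, dist v w < ε → v = w := by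
  obtain ⟨B, hK, -⟩ := not_not.mp hw
  have hN := hA.sub_smul_one w
  have := finiteDimensional_ker_of_isCompactOperator hK
  obtain ⟨c, hc, hcN⟩ := exists_mul_norm_le_of_mem_orthogonal_ker hK
  refine ⟨c, hc, fun v hv hvw => by_contra fun hne => ?_⟩
  have hμ : 0 < ‖v - w‖ := norm_pos_iff.mpr (sub_ne_zero.mpr hne)
  have hμc : ‖v - w‖ < c := by rwa [← dist_eq_norm]
  have hunit : IsUnit (A - w • 1 - (v - w) • 1) :=
    (hN.sub_smul_one _).isUnit_of_forall_mul_norm_le (lt_min hμ (by linarith))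
      (hN.min_mul_norm_le_norm_sub_smul_apply hcN hμc.le)
  rw [spectrum.mem_iff, Algebra.algebraMap_eq_smul_one, ← neg_sub, IsUnit.neg_iff] at hv
  exact hv (by rwa [sub_sub, ← add_smul, add_sub_cancel] at hunit)

theorem mem_discSpectrum_of_apply_eq_zero (hA : IsStarNormal A) {z : ℂ}
    (hz : z ∉ essSpectrum A) {x : H} (hx : x ≠ 0) (h : (A - z • 1) x = 0) :
    z ∈ discSpectrum A :=
  ⟨mem_spectrum_of_apply_eq_zero hx h, exists_spectrum_isolated_of_notMem_essSpectrum hA hz,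
    (Submodule.ne_bot_iff _).mpr ⟨x, h, hx⟩, finiteDimensional_ker_of_notMem_essSpectrum hz⟩

theorem mem_discSpectrum_adjoint (hA : IsStarNormal A) {z : ℂ} (hz : conj z ∈ discSpectrum A) :
    z ∈ discSpectrum (adjoint A) := by
  obtain ⟨hspec, ⟨ε, hε, hiso⟩, hne, hfin⟩ := hz
  have hker : LinearMap.ker ((adjoint A - z • 1 : H →L[ℂ] H) : H →ₗ[ℂ] H) =
      LinearMap.ker ((A - conj z • 1 : H →L[ℂ] H) : H →ₗ[ℂ] H) := by
    ext x
    simpa [adjoint_sub_conj_smul_one] using ((hA.sub_smul_one (conj z)).adjoint_apply_eq_zero_iff x)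
  have hσ : ∀ v, v ∈ spectrum ℂ (adjoint A) ↔ conj v ∈ spectrum ℂ A := fun v => by
    rw [← star_eq_adjoint, spectrum.map_star]
    rfl
  refine ⟨(hσ z).mpr hspec, ⟨ε, hε, fun v hv hvz => ?_⟩, hker ▸ hne, hker ▸ hfin⟩
  exact (starRingEnd ℂ).injective (hiso _ ((hσ v).mp hv) (by rwa [Complex.dist_conj_conj]))

theorem mem_discSpectrum_union_of_quadPencil_apply_eq_zero (hA : IsStarNormal A) {z : ℂ}
    (hz : z ∉ essSpectrum A) (hz' : conj z ∉ essSpectrum A) {x : H} (hx : x ≠ 0)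
    (hTx : quadPencil A z x = 0) : z ∈ discSpectrum A ∪ discSpectrum (adjoint A) := by
  by_cases h : (A - z • 1) x = 0
  · exact Or.inl (mem_discSpectrum_of_apply_eq_zero hA hz hx h)
  refine Or.inr (mem_discSpectrum_adjoint hA (mem_discSpectrum_of_apply_eq_zero hA hz' h ?_))
  rw [quadPencil, mul_apply_eq_comp, ← adjoint_sub_conj_smul_one] at hTx
  exact ((hA.sub_smul_one _).adjoint_apply_eq_zero_iff _).mp hTx

end Spectrum

theorem notMem_of_notMem_QSet {S : Set ℂ} {z : ℂ} (hz : z ∉ QSet S) : z ∉ S ∧ conj z ∉ S := by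
  refine ⟨fun h => hz ?_, fun h => hz ?_⟩ <;>
    exact subset_closure (subset_convexHull ℝ _ ⟨_, h, by simp⟩)

theorem exists_lt_re_mul_of_notMem_QSet {S : Set ℂ} {z : ℂ} (hz : z ∉ QSet S) :
    ∃ c : ℂ, ∃ γ > (0 : ℝ), ∀ s ∈ sigmaSet S z, γ < (c * s).re := by
  obtain ⟨f, u, hfu, hb⟩ := geometric_hahn_banach_point_closed
    (convex_convexHull ℝ _).closure isClosed_closure hz
  refine ⟨f 1 - f I * I, u, by simpa using hfu, fun s hs => ?_⟩
  have hfs : f s = s.re * f 1 + s.im * f I := by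
    conv_lhs => rw [← Complex.re_add_im s, ← mul_one (s.re : ℂ), ← Complex.real_smul,
      ← Complex.real_smul, map_add, map_smul, map_smul, smul_eq_mul, smul_eq_mul]
  have := hb s (subset_closure (subset_convexHull ℝ _ hs))
  simp only [Complex.mul_re, Complex.sub_re, Complex.sub_im, Complex.ofReal_re,
    Complex.ofReal_im, Complex.mul_im, Complex.I_re, Complex.I_im]
  linarith

section FunctionalCalculus

variable {A : H →L[ℂ] H}

theorem isCompactOperator_cfc_of_eqOn_singleton (hA : IsStarNormal A) {μ : ℂ}
    (hμ : μ ∉ essSpectrum A) {g : ℂ → ℂ} (hg : ∀ l ∈ spectrum ℂ A, l ≠ μ → g l = 0) :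
    IsCompactOperator ⇑(cfc g A) := by
  by_cases hgc : ContinuousOn g (spectrum ℂ A)
  swap
  · rw [cfc_apply_of_not_continuousOn A hgc]
    exact isCompactOperator_zero
  have hker : (A - μ • 1) * cfc g A = 0 := by
    have : cfc (fun l => (l - μ) * g l) A = 0 := by
      rw [← cfc_zero ℂ A]
      refine cfc_congr fun l hl => ?_
      rcases eq_or_ne l μ with rfl | hne
      · simp
      · simp [hg l hl hne]
    rwa [cfc_mul .., cfc_sub .., cfc_id' .., cfc_const .., Algebra.algebraMap_eq_smul_one] at this
  have := finiteDimensional_ker_of_notMem_essSpectrum hμ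
  refine isCompactOperator_of_forall_mem _ (LinearMap.ker ((A - μ • 1 : H →L[ℂ] H) : H →ₗ[ℂ] H))
    fun x => ?_
  simpa using congr($hker x)

theorem finite_of_isCompact_of_forall_notMem_essSpectrum (hA : IsStarNormal A) {S : Set ℂ}
    (hS : IsCompact S) (hSA : S ⊆ spectrum ℂ A) (hess : ∀ μ ∈ S, μ ∉ essSpectrum A) :
    S.Finite := by
  refine hS.finite (isDiscrete_iff_forall_mem_exists_isOpen.mpr fun μ hμ => ?_)
  obtain ⟨ε, hε, hiso⟩ := exists_spectrum_isolated_of_notMem_essSpectrum hA (hess μ hμ)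
  refine ⟨Metric.ball μ ε, Metric.isOpen_ball, ?_⟩
  ext v
  simp only [Set.mem_inter_iff, Metric.mem_ball, Set.mem_singleton_iff]
  exact ⟨fun h => hiso v (hSA h.2) h.1, by rintro rfl; exact ⟨by simpa using hε, hμ⟩⟩

theorem isCompactOperator_cfc_of_eqOn_finite (hA : IsStarNormal A) {S : Set ℂ} (hS : S.Finite)
    (hess : ∀ μ ∈ S, μ ∉ essSpectrum A) {g : ℂ → ℂ}
    (hg : ∀ l ∈ spectrum ℂ A, l ∉ S → g l = 0) : IsCompactOperator ⇑(cfc g A) := by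
  by_cases hgc : ContinuousOn g (spectrum ℂ A)
  swap
  · rw [cfc_apply_of_not_continuousOn A hgc]
    exact isCompactOperator_zero
  choose! ε hε hiso using fun μ hμ => exists_spectrum_isolated_of_notMem_essSpectrum hA (hess μ hμ)
  -- continuous stand-ins for the indicators of the points of `S`, as `cfc_sum` needs continuity
  set b : ℂ → ℂ → ℂ := fun μ l => ((max 0 (1 - dist l μ / ε μ) : ℝ) : ℂ)
  have hb : ∀ μ ∈ S, ∀ l ∈ spectrum ℂ A, b μ l = if l = μ then 1 else 0 := by
    intro μ hμ l hl
    split_ifs with h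
    · simp [b, h]
    · have : ε μ ≤ dist l μ := not_lt.mp fun hlt => h (hiso μ hμ l hl hlt)
      have : 1 - dist l μ / ε μ ≤ 0 := by rwa [sub_nonpos, one_le_div (hε μ hμ)]
      simp [b, max_eq_left this]
  have hsum : cfc g A = ∑ μ ∈ hS.toFinset, cfc (fun l => g l * b μ l) A := by
    rw [← cfc_sum (fun μ l => g l * b μ l) A _ fun μ _ =>
      hgc.mul (Continuous.continuousOn (by simp only [b]; fun_prop))]
    refine cfc_congr fun l hl => ?_
    rw [Finset.sum_apply, Finset.sum_congr rfl fun μ hμ => by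
      rw [hb μ (hS.mem_toFinset.mp hμ) l hl, mul_ite, mul_one, mul_zero], Finset.sum_ite_eq]
    split_ifs with hlS
    · rfl
    · exact hg l hl (by simpa using hlS)
  rw [hsum]
  refine Finset.sum_induction _ (fun T : H →L[ℂ] H => IsCompactOperator ⇑T)
    (fun _ _ => IsCompactOperator.add) isCompactOperator_zero fun μ hμ => ?_
  refine isCompactOperator_cfc_of_eqOn_singleton hA (hess μ (hS.mem_toFinset.mp hμ))
    fun l hl hne => ?_
  rw [hb μ (hS.mem_toFinset.mp hμ) l hl, if_neg hne, mul_zero]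

open scoped ComplexOrder in
theorem exists_isCompactOperator_le_re_inner_cfc (hA : IsStarNormal A) {f : ℂ → ℝ}
    (hf : ContinuousOn f (spectrum ℂ A)) {γ : ℝ} (hγ : ∀ l ∈ essSpectrum A, γ < f l) :
    ∃ C : H →L[ℂ] H, IsCompactOperator ⇑C ∧
      ∀ x, γ * ‖x‖ ^ 2 ≤ re ⟪x, cfc (fun l => (f l : ℂ)) A x⟫_ℂ - re ⟪x, C x⟫_ℂ := by
  set S := {l ∈ spectrum ℂ A | f l ≤ γ}
  have hSess : ∀ μ ∈ S, μ ∉ essSpectrum A := fun μ hμ hess => (hγ μ hess).not_ge hμ.2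
  have hSc : IsCompact S := (spectrum.isCompact A).of_isClosed_subset
    (hf.preimage_isClosed_of_isClosed (spectrum.isClosed A) isClosed_Iic) fun _ h => h.1
  have hS := finite_of_isCompact_of_forall_notMem_essSpectrum hA hSc (fun _ h => h.1) hSess
  set g : ℂ → ℝ := fun l => max (f l) γ
  have hgc : ContinuousOn g (spectrum ℂ A) := hf.sup continuousOn_const
  refine ⟨cfc (fun l => ((f l - g l : ℝ) : ℂ)) A,
    isCompactOperator_cfc_of_eqOn_finite hA hS hSess fun l hl hlS => ?_, fun x => ?_⟩
  · have : γ < f l := not_le.mp fun h => hlS ⟨hl, h⟩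
    simp [g, max_eq_left this.le]
  have hsplit : cfc (fun l => (f l : ℂ)) A - cfc (fun l => ((f l - g l : ℝ) : ℂ)) A =
      cfc (fun l => (g l : ℂ)) A := by
    rw [← cfc_sub ..]
    exact cfc_congr fun l _ => by push_cast; ring
  have hle : algebraMap ℂ (H →L[ℂ] H) γ ≤ cfc (fun l => (g l : ℂ)) A :=
    algebraMap_le_cfc _ _ A fun l _ => by exact_mod_cast le_max_right (f l) γ
  have hpos := ((ContinuousLinearMap.le_def _ _).mp hle).re_inner_nonneg_right x
  rw [← Complex.sub_re, ← inner_sub_right, ← sub_apply, hsplit]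
  rw [sub_apply, inner_sub_right, map_sub, Algebra.algebraMap_eq_smul_one, smul_apply,
    one_apply_eq_self, inner_smul_right, inner_self_eq_norm_sq_to_K] at hpos
  simpa [← Complex.ofReal_pow] using hpos

theorem re_inner_cfc_re {h : ℂ → ℂ} (hh : ContinuousOn h (spectrum ℂ A)) (x : H) :
    re ⟪x, cfc (fun l => ((h l).re : ℂ)) A x⟫_ℂ = re ⟪x, cfc h A x⟫_ℂ := by
  have : cfc (fun l => ((h l).re : ℂ)) A = (2⁻¹ : ℂ) • (cfc h A + star (cfc h A)) := by
    rw [← cfc_star, ← cfc_add .., ← cfc_smul ..]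
    exact cfc_congr fun l _ => by rw [Complex.re_eq_add_conj, Complex.star_def]; ring
  rw [this, smul_apply, add_apply, inner_smul_right, inner_add_right, star_eq_adjoint,
    adjoint_inner_right, ← inner_conj_symm (cfc h A x), Complex.add_conj]
  simp

theorem quadPencil_eq_cfc (hA : IsStarNormal A) (w : ℂ) :
    quadPencil A w = cfc (fun l => (conj l - w) * (l - w)) A := by
  rw [cfc_mul .., cfc_sub .., cfc_sub .., ← Complex.star_def, cfc_star_id .., cfc_id' ..,
    cfc_const .., Algebra.algebraMap_eq_smul_one, star_eq_adjoint, quadPencil]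

theorem exists_isCompactOperator_le_re_mul_inner_quadPencil (hA : IsStarNormal A) {z c : ℂ}
    {γ : ℝ} (hsep : ∀ s ∈ sigmaSet (essSpectrum A) z, γ < (c * s).re) :
    ∃ C : H →L[ℂ] H, IsCompactOperator ⇑C ∧
      ∀ x, γ * ‖x‖ ^ 2 ≤ (c * ⟪x, quadPencil A z x⟫_ℂ).re - re ⟪x, C x⟫_ℂ := by
  set t : ℂ → ℂ := fun l => c * ((conj l - z) * (l - z))
  have ht : ContinuousOn t (spectrum ℂ A) := Continuous.continuousOn (by fun_prop)
  obtain ⟨C, hC, hle⟩ := exists_isCompactOperator_le_re_inner_cfc hA (f := fun l => (t l).re)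
    (Complex.continuous_re.comp_continuousOn ht) fun l hl => by
      simpa [t, mul_comm (l - z)] using hsep _ ⟨l, hl, rfl⟩
  refine ⟨C, hC, fun x => ?_⟩
  rw [← inner_smul_right, ← smul_apply, quadPencil_eq_cfc hA, ← cfc_const_mul ..]
  simpa only [re_inner_cfc_re ht] using hle x

end FunctionalCalculus

theorem projCLM_eq_orthogonalProjectionOnto (L : Submodule ℂ E) [L.HasOrthogonalProjection] :
    projCLM L = L.orthogonalProjectionOnto :=
  dif_pos _

section SecondOrderSpectrum

variable (A : H →L[ℂ] H)

theorem inner_quadPencil_apply (z : ℂ) (φ ψ : H) :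
    ⟪quadPencil A z φ, ψ⟫_ℂ = ⟪(A - z • 1) φ, (A - conj z • 1) ψ⟫_ℂ := by
  rw [quadPencil, mul_apply_eq_comp, ← adjoint_sub_conj_smul_one, adjoint_inner_left]

theorem spectrum_SL_subset_Spec2 (L : Submodule ℂ H) [FiniteDimensional ℂ L] :
    spectrum ℂ (SL A L) ⊆ Spec2 A L := by
  intro w hw
  rw [ContinuousLinearMap.spectrum_eq, ← Module.End.hasEigenvalue_iff_mem_spectrum] at hw
  obtain ⟨v, hv, hv0⟩ := hw.exists_hasEigenvector
  have hSv : SL A L v = w • v := Module.End.mem_eigenspace_iff.mp hv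
  have h1 := congrArg Prod.fst hSv
  have h2 := congrArg Prod.snd hSv
  simp only [SL, block2, compress, add_comp, comp_add, neg_comp, zero_comp, add_zero, prod_apply,
    add_apply, comp_apply, coe_fst', Submodule.coe_subtypeL, Submodule.subtype_apply, neg_apply,
    coe_snd', mul_apply_eq_comp, one_apply_eq_self, Prod.smul_fst, Prod.smul_snd] at h1 h2
  set u : H := (v.2 : H)
  have hu0 : u ≠ 0 := fun h => by
    have : v.2 = 0 := Subtype.ext h
    exact hv0 (Prod.ext (by simp [h2, this]) this)
  have hPu : projCLM L u = v.2 := by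
    rw [projCLM_eq_orthogonalProjectionOnto]
    exact Submodule.orthogonalProjectionOnto_mem_subspace_eq_self v.2
  have hPT : projCLM L (quadPencil A w u) = 0 := by
    rw [h2] at h1
    simp only [Submodule.coe_smul, map_smul] at h1
    simp only [quadPencil, mul_apply_eq_comp, sub_apply, smul_apply, one_apply_eq_self, map_sub,
      map_smul, hPu]
    linear_combination (norm := module) -h1
  rw [projCLM_eq_orthogonalProjectionOnto, Submodule.orthogonalProjectionOnto_eq_zero_iff] at hPT
  refine ⟨u, v.2.2, hu0, fun ψ hψ => ?_⟩
  rw [← inner_quadPencil_apply]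
  exact Submodule.inner_left_of_mem_orthogonal hψ hPT

theorem exists_norm_eq_one_of_mem_Spec2 {L : Submodule ℂ H} {z : ℂ} (hz : z ∈ Spec2 A L) :
    ∃ φ ∈ L, ‖φ‖ = 1 ∧ ∀ ψ ∈ L, ⟪quadPencil A z φ, ψ⟫_ℂ = 0 := by
  obtain ⟨φ, hφL, hφ0, hφ⟩ := hz
  refine ⟨(‖φ‖⁻¹ : ℂ) • φ, L.smul_mem _ hφL, norm_smul_inv_norm hφ0, fun ψ hψ => ?_⟩
  rw [map_smul, inner_smul_left, inner_quadPencil_apply, hφ ψ hψ, mul_zero]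

end SecondOrderSpectrum

def TendstoWeakly {ι : Type*} (x : ι → E) (l : Filter ι) (φ : E) : Prop :=
  ∀ y, Tendsto (fun i => ⟪x i, y⟫_ℂ) l (𝓝 ⟪φ, y⟫_ℂ)

section WeakLimits

variable {ι : Type*} {R : ℝ}

theorem exists_tendstoWeakly (U : Ultrafilter ι) {x : ι → H} (hx : ∀ i, ‖x i‖ ≤ R) :
    ∃ φ, TendstoWeakly x U φ := by
  have hlim : ∀ y, ∃ l : ℂ, ‖l‖ ≤ R * ‖y‖ ∧ Tendsto (fun i => ⟪x i, y⟫_ℂ) U (𝓝 l) := by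
    intro y
    have hmem : ∀ i, ⟪x i, y⟫_ℂ ∈ Metric.closedBall 0 (R * ‖y‖) := fun i =>
      mem_closedBall_zero_iff.mpr ((norm_inner_le_norm _ _).trans
        (mul_le_mul_of_nonneg_right (hx i) (norm_nonneg y)))
    obtain ⟨l, hl, hlim⟩ := (isCompact_closedBall (0 : ℂ) (R * ‖y‖)).ultrafilter_le_nhds
      (U.map fun i => ⟪x i, y⟫_ℂ)
      (by rw [Ultrafilter.coe_map, le_principal_iff, mem_map]; exact Eventually.of_forall hmem)
    exact ⟨l, mem_closedBall_zero_iff.mp hl, hlim⟩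
  choose l hlR hlim using hlim
  let G : H →ₗ[ℂ] ℂ :=
    { toFun := l
      map_add' := fun y y' => tendsto_nhds_unique (by simpa [inner_add_right] using hlim (y + y'))
        ((hlim y).add (hlim y'))
      map_smul' := fun a y => tendsto_nhds_unique (by simpa [inner_smul_right] using hlim (a • y))
        ((hlim y).const_mul a) }
  refine ⟨(InnerProductSpace.toDual ℂ H).symm (G.mkContinuous R hlR), fun y => ?_⟩
  rw [InnerProductSpace.toDual_symm_apply]
  exact hlim y

theorem IsCompactOperator.tendsto_inner_apply_self {C : E →L[ℂ] E} (hC : IsCompactOperator ⇑C)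
    {U : Ultrafilter ι} {x : ι → E} (hx : ∀ i, ‖x i‖ ≤ R) (hw : TendstoWeakly x U 0) :
    Tendsto (fun i => ⟪x i, C (x i)⟫_ℂ) U (𝓝 0) := by
  have hmem : ∀ i, C (x i) ∈ closure (C '' Metric.closedBall 0 R) := fun i =>
    subset_closure ⟨x i, mem_closedBall_zero_iff.mpr (hx i), rfl⟩
  obtain ⟨v, -, hv⟩ := (hC.isCompact_closure_image_closedBall R).ultrafilter_le_nhds
    (U.map (C ∘ x))
    (by rw [Ultrafilter.coe_map, le_principal_iff, mem_map]; exact Eventually.of_forall hmem)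
  have hsmall : Tendsto (fun i => ⟪x i, C (x i) - v⟫_ℂ) U (𝓝 0) := by
    refine squeeze_zero_norm (fun i => (norm_inner_le_norm _ _).trans
      (mul_le_mul_of_nonneg_right (hx i) (norm_nonneg _))) ?_
    simpa using ((tendsto_iff_norm_sub_tendsto_zero.mp hv).const_mul R)
  simpa [inner_sub_right] using hsmall.add (hw v)

end WeakLimits

section GalerkinLimit

theorem tendsto_inner_apply_self_of_tendsto {T : E →L[ℂ] E} {Tn : ℕ → E →L[ℂ] E} {φ : ℕ → E}
    (hT : Tendsto Tn atTop (𝓝 T)) (hφ1 : ∀ n, ‖φ n‖ = 1) (hφ : ∀ n, ⟪Tn n (φ n), φ n⟫_ℂ = 0) :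
    Tendsto (fun n => ⟪φ n, T (φ n)⟫_ℂ) atTop (𝓝 0) := by
  have hbound : ∀ n, ‖⟪φ n, T (φ n)⟫_ℂ‖ ≤ ‖Tn n - T‖ := fun n => by
    have : ⟪φ n, T (φ n)⟫_ℂ = -⟪φ n, (Tn n - T) (φ n)⟫_ℂ := by
      rw [sub_apply, inner_sub_right, ← inner_conj_symm (φ n) (Tn n (φ n)), hφ n, map_zero,
        zero_sub, neg_neg]
    rw [this, norm_neg]
    calc _ ≤ ‖φ n‖ * ‖(Tn n - T) (φ n)‖ := norm_inner_le_norm _ _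
      _ ≤ ‖Tn n - T‖ := by simpa [hφ1 n] using (Tn n - T).le_opNorm (φ n)
  exact squeeze_zero_norm hbound (tendsto_iff_norm_sub_tendsto_zero.mp hT)

variable {L : ℕ → Submodule ℂ H} {T : H →L[ℂ] H} {Tn : ℕ → H →L[ℂ] H} {φ : ℕ → H}

theorem apply_eq_zero_of_tendstoWeakly
    (hconv : ∀ ψ : H, Tendsto (fun n => projAmb (L n) ψ) atTop (𝓝 ψ))
    (hT : Tendsto Tn atTop (𝓝 T)) (hφ1 : ∀ n, ‖φ n‖ = 1)
    (hφ : ∀ n, ∀ ψ ∈ L n, ⟪Tn n (φ n), ψ⟫_ℂ = 0) {l : Filter ℕ} [l.NeBot] (hl : l ≤ atTop)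
    {x : H} (hx : TendstoWeakly φ l x) : T x = 0 := by
  have key : ∀ ψ, ⟪T x, ψ⟫_ℂ = 0 := by
    intro ψ
    have hsplit : ∀ n, ⟪T (φ n), ψ⟫_ℂ =
        ⟪T (φ n), ψ - projAmb (L n) ψ⟫_ℂ + ⟪(T - Tn n) (φ n), projAmb (L n) ψ⟫_ℂ := fun n => by
      have hmem : projAmb (L n) ψ ∈ L n := (projCLM (L n) ψ).2
      rw [sub_apply, inner_sub_left, hφ n _ hmem, inner_sub_right]
      ring
    have hbound : ∀ n, ‖⟪T (φ n), ψ⟫_ℂ‖ ≤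
        ‖T‖ * ‖ψ - projAmb (L n) ψ‖ + ‖T - Tn n‖ * ‖projAmb (L n) ψ‖ := fun n => by
      rw [hsplit n]
      refine (norm_add_le _ _).trans (add_le_add ?_ ?_) <;>
      refine (norm_inner_le_norm _ _).trans (mul_le_mul_of_nonneg_right ?_ (norm_nonneg _))
      · simpa [hφ1 n] using T.le_opNorm (φ n)
      · simpa [hφ1 n] using (T - Tn n).le_opNorm (φ n)
    have hlim : Tendsto (fun n => ‖T‖ * ‖ψ - projAmb (L n) ψ‖ + ‖T - Tn n‖ * ‖projAmb (L n) ψ‖)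
        atTop (𝓝 0) := by
      have h1 := ((tendsto_const_nhds (x := ψ)).sub (hconv ψ)).norm.const_mul ‖T‖
      have h2 := (tendsto_iff_norm_sub_tendsto_zero.mp hT).mul (hconv ψ).norm
      simpa [norm_sub_rev T] using h1.add h2
    have h1 : Tendsto (fun n => ⟪T (φ n), ψ⟫_ℂ) l (𝓝 ⟪T x, ψ⟫_ℂ) := by
      simpa only [adjoint_inner_right] using hx (adjoint T ψ)
    exact tendsto_nhds_unique h1 ((squeeze_zero_norm hbound hlim).mono_left hl)
  simpa using key (T x)

theorem exists_ne_zero_apply_eq_zero_of_galerkin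
    (hconv : ∀ ψ : H, Tendsto (fun n => projAmb (L n) ψ) atTop (𝓝 ψ))
    (hT : Tendsto Tn atTop (𝓝 T)) (hφL : ∀ n, φ n ∈ L n) (hφ1 : ∀ n, ‖φ n‖ = 1)
    (hφ : ∀ n, ∀ ψ ∈ L n, ⟪Tn n (φ n), ψ⟫_ℂ = 0) {C : H →L[ℂ] H} (hC : IsCompactOperator ⇑C)
    {c : ℂ} {γ : ℝ} (hγ : 0 < γ)
    (hgarding : ∀ x, γ * ‖x‖ ^ 2 ≤ (c * ⟪x, T x⟫_ℂ).re - re ⟪x, C x⟫_ℂ) :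
    ∃ x, x ≠ 0 ∧ T x = 0 := by
  set U := Ultrafilter.of (atTop : Filter ℕ)
  have hU : (U : Filter ℕ) ≤ atTop := Ultrafilter.of_le _
  obtain ⟨x, hx⟩ := exists_tendstoWeakly U fun n => (hφ1 n).le
  refine ⟨x, fun hx0 => ?_, apply_eq_zero_of_tendstoWeakly hconv hT hφ1 hφ hU hx⟩
  subst hx0
  have hC0 := hC.tendsto_inner_apply_self (fun n => (hφ1 n).le) hx
  have hT0 := (tendsto_inner_apply_self_of_tendsto hT hφ1 fun n => hφ n _ (hφL n)).mono_left hU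
  have hlim : Tendsto (fun n => (c * ⟪φ n, T (φ n)⟫_ℂ).re - re ⟪φ n, C (φ n)⟫_ℂ) U (𝓝 0) := by
    simpa using ((Complex.continuous_re.tendsto _).comp (hT0.const_mul c)).sub
      ((Complex.continuous_re.tendsto _).comp hC0)
  have : γ ≤ 0 :=
    ge_of_tendsto hlim (Eventually.of_forall fun n => by simpa [hφ1 n] using hgarding (φ n))
  linarith

end GalerkinLimit

theorem stmt13_general (A : H →L[ℂ] H) (hA : IsStarNormal A)
    (L : ℕ → Submodule ℂ H) (hfd : ∀ n, FiniteDimensional ℂ ↥(L n))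
    (hconv : ∀ ψ : H, Filter.Tendsto (fun n => projAmb (L n) ψ) Filter.atTop (nhds ψ))
    (z : ℂ) (hz : z ∉ QSet (essSpectrum A))
    (zseq : ℕ → ℂ) (hzseq : ∀ n, zseq n ∈ spectrum ℂ (SL A (L n)))
    (hlim : Filter.Tendsto zseq Filter.atTop (nhds z)) :
    z ∈ discSpectrum A ∪ discSpectrum (ContinuousLinearMap.adjoint A) := by
  obtain ⟨c, γ, hγ, hsep⟩ := exists_lt_re_mul_of_notMem_QSet hz
  obtain ⟨C, hC, hgarding⟩ := exists_isCompactOperator_le_re_mul_inner_quadPencil hA hsep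
  have hspec2 : ∀ n, zseq n ∈ Spec2 A (L n) := fun n =>
    have := hfd n
    spectrum_SL_subset_Spec2 A (L n) (hzseq n)
  choose φ hφL hφ1 hφ using fun n => exists_norm_eq_one_of_mem_Spec2 A (hspec2 n)
  obtain ⟨x, hx0, hx⟩ := exists_ne_zero_apply_eq_zero_of_galerkin hconv
    (((continuous_quadPencil A).tendsto z).comp hlim) hφL hφ1 hφ hC hγ hgarding
  obtain ⟨hzess, hzess'⟩ := notMem_of_notMem_QSet hz
  exact mem_discSpectrum_union_of_quadPencil_apply_eq_zero hA hzess hzess' hx0 hx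

/-- Corollary 4.5: any limit of second order spectra outside `Q(σ_ess(A))` belongs to
`σ_dis(A) ∪ σ_dis(A*)`. -/
theorem stmt13 (A : H →L[ℂ] H) (hA : IsStarNormal A)
    (hinf : ¬ FiniteDimensional ℂ H)
    (L : ℕ → Submodule ℂ H) (hfd : ∀ n, FiniteDimensional ℂ ↥(L n))
    (hconv : ∀ ψ : H, Filter.Tendsto (fun n => projAmb (L n) ψ) Filter.atTop (nhds ψ))
    (z : ℂ) (hz : z ∉ QSet (essSpectrum A))
    (zseq : ℕ → ℂ) (hzseq : ∀ n, zseq n ∈ spectrum ℂ (SL A (L n)))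
    (hlim : Filter.Tendsto zseq Filter.atTop (nhds z)) :
    z ∈ discSpectrum A ∪ discSpectrum (ContinuousLinearMap.adjoint A) :=
  stmt13_general A hA L hfd hconv z hz zseq hzseq hlim

end
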